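/- Define on the free ℚ[q]-module with basis ⊔_{n≥0} ℕ^n the multiplication μ * ν = ∑_{a∈ℕ^m, b∈ℕ^n} c_{m,n}^{a,b} · (μ+a, ν+b) for μ ∈ ℕ^m, ν ∈ ℕ^n (with the empty vector acting as identity), where c_{m,n}^{a,b} is the coefficient of x^{(a,b)} in ∏_{s=m+1}^{m+n} ∏_{t=1}^{m} (x_s - q·x_t)^{d-1} and (μ+a, ν+b) denotes concatenation of componentwise sums. Then this multiplication is associative: (μ*ν)*w = μ*(ν*w) for all μ, ν, w. -/

import Mathlib

open MvPolynomial Finset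

noncomputable section

/-- The quantization variable `q` in `ℚ[q]`. -/
def qv : Polynomial ℚ := Polynomial.X

/-- The kernel polynomial `g_{m,n} = ∏_{s=m+1}^{m+n} ∏_{t=1}^{m} (x_s - q x_t)^{d-1}`,
with variables indexed by `ℕ` (indices `0,…,m-1` for the first group and
`m,…,m+n-1` for the second).  Its coefficients are the `c_{m,n}^{a,b}`. -/
def gPoly (d m n : ℕ) : MvPolynomial ℕ (Polynomial ℚ) :=
  ∏ s ∈ Finset.Ico m (m + n), ∏ t ∈ Finset.range m, (X s - C qv * X t) ^ (d - 1)

/-- `Λ̂`, the disjoint union of all `ℕ^n` for `n ≥ 0`. -/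
def LambdaHat : Type := Σ n : ℕ, (Fin n → ℕ)

/-- The product of two basis elements of `𝔸^d_q(Λ̂)`:
`μ * ν = ∑_{a ∈ ℕ^m, b ∈ ℕ^n} c_{m,n}^{a,b} (μ+a, ν+b)`.
(The sum is realised as a sum over the monomials `e` in the support of `g_{m,n}`,
with `a i = e i` and `b j = e (m+j)`; all other coefficients `c_{m,n}^{a,b}` vanish.) -/
def basisMul (d : ℕ) (μ ν : LambdaHat) : LambdaHat →₀ Polynomial ℚ :=
  ∑ e ∈ (gPoly d μ.1 ν.1).support,
    Finsupp.single
      ⟨μ.1 + ν.1, Fin.append (fun i => μ.2 i + e (i : ℕ)) (fun j => ν.2 j + e (μ.1 + (j : ℕ)))⟩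
      (MvPolynomial.coeff e (gPoly d μ.1 ν.1))

/-- The bilinear extension of `basisMul` to the free `ℚ[q]`-module `𝔸^d_q(Λ̂)`. -/
def amul (d : ℕ) (f g : LambdaHat →₀ Polynomial ℚ) : LambdaHat →₀ Polynomial ℚ :=
  ∑ μ ∈ f.support, ∑ ν ∈ g.support, (f μ * g ν) • basisMul d μ ν

/-!
Write `g_{m,n}` for `gPoly d m n` and `σ_m` for the substitution `x_j ↦ x_{m+j}`. The product
`μ * ν` of basis vectors is the coefficient vector of `g_{m,n}` with the monomial `x^e` sent to
the basis vector `(μ, ν) + e`. Since `g_{m,n}` only involves `x_0, …, x_{m+n-1}`, the triple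
products `(μ * ν) * w` and `μ * (ν * w)` are the coefficient vectors, pushed along
`e ↦ (μ, ν, w) + e`, of `g_{m,n} g_{m+n,p}` and `σ_m(g_{n,p}) g_{m,n+p}` respectively. Both
polynomials are the product of `(x_s - q x_t)^{d-1}` over the pairs `t < s` lying in different
blocks of `[0, m) ⊔ [m, m+n) ⊔ [m+n, m+n+p)`.
-/

lemma amul_single_one_left (d : ℕ) (μ : LambdaHat) (g : LambdaHat →₀ Polynomial ℚ) :
    amul d (Finsupp.single μ 1) g = g.sum fun ν c => c • basisMul d μ ν := by
  simp [amul, Finsupp.sum]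

lemma amul_single_one_right (d : ℕ) (f : LambdaHat →₀ Polynomial ℚ) (w : LambdaHat) :
    amul d f (Finsupp.single w 1) = f.sum fun μ c => c • basisMul d μ w := by
  simp [amul, Finsupp.sum]

lemma amul_single_one_single_one (d : ℕ) (μ ν : LambdaHat) :
    amul d (Finsupp.single μ 1) (Finsupp.single ν 1) = basisMul d μ ν := by
  rw [amul_single_one_left, Finsupp.sum_single_index] <;> simp

lemma gPoly_mem_supported (d m n : ℕ) :
    gPoly d m n ∈ supported (Polynomial ℚ) (Set.Iio (m + n)) := by
  refine Subalgebra.prod_mem _ fun s hs => Subalgebra.prod_mem _ fun t ht => ?_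
  rw [Finset.mem_Ico] at hs
  rw [Finset.mem_range] at ht
  refine Subalgebra.pow_mem _ (Subalgebra.sub_mem _ ?_ (Subalgebra.mul_mem _ ?_ ?_)) _
  · exact X_mem_supported.2 (Set.mem_Iio.2 hs.2)
  · exact Subalgebra.algebraMap_mem _ qv
  · exact X_mem_supported.2 (Set.mem_Iio.2 (by omega))

lemma eq_zero_of_mem_support_gPoly {d m n : ℕ} {e : ℕ →₀ ℕ}
    (he : e ∈ (gPoly d m n).support) {i : ℕ} (hi : m + n ≤ i) : e i = 0 := by
  by_contra h
  have hvar : i ∈ (gPoly d m n).vars :=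
    (mem_vars_iff_mem_support i).2 ⟨e, he, Finsupp.mem_support_iff.2 h⟩
  exact absurd (Set.mem_Iio.1 (mem_supported.1 (gPoly_mem_supported d m n) hvar)) (not_lt.2 hi)

lemma rename_add_left_gPoly (d m n p : ℕ) :
    rename (m + ·) (gPoly d n p) = ∏ s ∈ Ico (m + n) (m + n + p), ∏ t ∈ Ico m (m + n),
      (X s - C qv * X t : MvPolynomial ℕ (Polynomial ℚ)) ^ (d - 1) := by
  rw [gPoly, map_prod, Nat.add_assoc, ← Finset.map_add_left_Ico, Finset.prod_map]
  refine Finset.prod_congr rfl fun s _ => ?_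
  rw [map_prod, ← Nat.Ico_zero_eq_range,
    show Ico m (m + n) = (Ico 0 n).map (addLeftEmbedding m) by
      rw [Finset.map_add_left_Ico, m.add_zero],
    Finset.prod_map]
  simp

theorem gPoly_mul_gPoly (d m n p : ℕ) :
    gPoly d m n * gPoly d (m + n) p = rename (m + ·) (gPoly d n p) * gPoly d m (n + p) := by
  have split_first (s : ℕ) : ∏ t ∈ range (m + n), (X s - C qv * X t) ^ (d - 1) =
      (∏ t ∈ range m, (X s - C qv * X t) ^ (d - 1)) *
        ∏ t ∈ Ico m (m + n), (X s - C qv * X t : MvPolynomial ℕ (Polynomial ℚ)) ^ (d - 1) :=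
    (Finset.prod_range_mul_prod_Ico _ (Nat.le_add_right m n)).symm
  rw [rename_add_left_gPoly, gPoly, gPoly, gPoly, ← Nat.add_assoc,
    ← Finset.prod_Ico_consecutive _ (Nat.le_add_right m n) (Nat.le_add_right (m + n) p)]
  simp only [split_first, Finset.prod_mul_distrib]
  ring

lemma coeff_rename_eq_mapDomain {σ τ R : Type*} [CommSemiring R] (f : σ → τ)
    (P : MvPolynomial σ R) : AddMonoidAlgebra.coeff (rename f P) =
      Finsupp.mapDomain (Finsupp.mapDomain f) (AddMonoidAlgebra.coeff P) := by
  induction P using MvPolynomial.induction_on' with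
  | monomial u r => rw [rename_monomial]; simp [monomial]
  | add P Q hP hQ => simp [hP, hQ, Finsupp.mapDomain_add]

lemma mapDomain_coeff_mul {σ R α : Type*} [CommSemiring R] (K : (σ →₀ ℕ) → α)
    (P Q : MvPolynomial σ R) :
    Finsupp.mapDomain K (AddMonoidAlgebra.coeff (P * Q)) = (AddMonoidAlgebra.coeff P).sum
      fun e c => c • Finsupp.mapDomain (fun f => K (e + f)) (AddMonoidAlgebra.coeff Q) := by
  simp only [AddMonoidAlgebra.mul_def, Finsupp.sum, AddMonoidAlgebra.coeff_sum,
    AddMonoidAlgebra.coeff_single, Finsupp.mapDomain_finsetSum, Finsupp.mapDomain_single]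
  refine Finset.sum_congr rfl fun e _ => ?_
  simp [Finsupp.mapDomain, Finsupp.sum, Finset.smul_sum]

def addExponent {N : ℕ} (v : Fin N → ℕ) (e : ℕ →₀ ℕ) : LambdaHat :=
  ⟨N, fun i => v i + e i⟩

lemma addExponent_append_add {m n : ℕ} (u : Fin m → ℕ) (v : Fin n → ℕ)
    {e : ℕ →₀ ℕ} (he : ∀ i, m ≤ i → e i = 0) (f : ℕ →₀ ℕ) :
    addExponent (Fin.append (fun i => u i + e i) v) f = addExponent (Fin.append u v) (e + f) := by
  refine congrArg (Sigma.mk _) (funext fun i => Fin.addCases (fun i => ?_) (fun j => ?_) i)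
  · simp [add_assoc]
  · simp [he (m + j) (Nat.le_add_right m j)]

lemma addExponent_append_mapDomain_add {m n : ℕ} (u : Fin m → ℕ) (v : Fin n → ℕ)
    (e f : ℕ →₀ ℕ) : addExponent (Fin.append u fun j => v j + e j) f =
      addExponent (Fin.append u v) (e.mapDomain (m + ·) + f) := by
  refine congrArg (Sigma.mk _) (funext fun i => Fin.addCases (fun i => ?_) (fun j => ?_) i)
  · have : (i : ℕ) ∉ Set.range (m + ·) := by rintro ⟨k, hk⟩; simp at hk; omega
    simp [Finsupp.mapDomain_of_notMem_range _ _ this]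
  · simp [Finsupp.mapDomain_apply (add_right_injective m), add_assoc]

lemma addExponent_append_assoc {m n p : ℕ} (u : Fin m → ℕ) (v : Fin n → ℕ)
    (w : Fin p → ℕ) :
    addExponent (Fin.append (Fin.append u v) w) =
      addExponent (Fin.append u (Fin.append v w)) := by
  funext e
  refine Sigma.ext (Nat.add_assoc m n p) ((Fin.heq_fun_iff (Nat.add_assoc m n p)).2 fun i => ?_)
  simp only [addExponent, Fin.append_assoc, Function.comp_apply]
  rfl

lemma basisMul_eq_mapDomain (d : ℕ) (μ ν : LambdaHat) :
    basisMul d μ ν = Finsupp.mapDomain (addExponent (Fin.append μ.2 ν.2))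
      (AddMonoidAlgebra.coeff (gPoly d μ.1 ν.1)) := by
  rw [basisMul, Finsupp.mapDomain, Finsupp.sum]
  refine Finset.sum_congr rfl fun e _ => congrArg (Finsupp.single · _) ?_
  refine congrArg (Sigma.mk _) (funext fun i => Fin.addCases (fun i => ?_) (fun j => ?_) i) <;>
    simp

lemma basisMul_addExponent_left (d : ℕ) {m : ℕ} (u : Fin m → ℕ) {e : ℕ →₀ ℕ}
    (he : ∀ i, m ≤ i → e i = 0) (w : LambdaHat) : basisMul d (addExponent u e) w =
      Finsupp.mapDomain (fun f => addExponent (Fin.append u w.2) (e + f))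
        (AddMonoidAlgebra.coeff (gPoly d m w.1)) := by
  rw [basisMul_eq_mapDomain]
  exact congrArg (Finsupp.mapDomain · _) (funext (addExponent_append_add u w.2 he))

lemma basisMul_addExponent_right (d : ℕ) (μ : LambdaHat) {n : ℕ} (v : Fin n → ℕ)
    (e : ℕ →₀ ℕ) : basisMul d μ (addExponent v e) =
      Finsupp.mapDomain (fun f => addExponent (Fin.append μ.2 v) (e.mapDomain (μ.1 + ·) + f))
        (AddMonoidAlgebra.coeff (gPoly d μ.1 n)) := by
  rw [basisMul_eq_mapDomain]
  exact congrArg (Finsupp.mapDomain · _) (funext (addExponent_append_mapDomain_add μ.2 v e))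

lemma amul_basisMul_single_one (d : ℕ) (μ ν w : LambdaHat) :
    amul d (basisMul d μ ν) (Finsupp.single w 1) =
      Finsupp.mapDomain (addExponent (Fin.append (Fin.append μ.2 ν.2) w.2))
        (AddMonoidAlgebra.coeff (gPoly d μ.1 ν.1 * gPoly d (μ.1 + ν.1) w.1)) := by
  rw [amul_single_one_right, mapDomain_coeff_mul, basisMul_eq_mapDomain,
    Finsupp.sum_mapDomain_index (by simp) (by simp [add_smul])]
  refine Finsupp.sum_congr fun e he => ?_
  rw [basisMul_addExponent_left _ _ fun i => eq_zero_of_mem_support_gPoly he]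

lemma amul_single_one_basisMul (d : ℕ) (μ ν w : LambdaHat) :
    amul d (Finsupp.single μ 1) (basisMul d ν w) =
      Finsupp.mapDomain (addExponent (Fin.append μ.2 (Fin.append ν.2 w.2)))
        (AddMonoidAlgebra.coeff
          (rename (μ.1 + ·) (gPoly d ν.1 w.1) * gPoly d μ.1 (ν.1 + w.1))) := by
  rw [amul_single_one_left, mapDomain_coeff_mul, coeff_rename_eq_mapDomain,
    basisMul_eq_mapDomain, Finsupp.sum_mapDomain_index (by simp) (by simp [add_smul]),
    Finsupp.sum_mapDomain_index (by simp) (by simp [add_smul])]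
  refine Finsupp.sum_congr fun e _ => ?_
  rw [basisMul_addExponent_right]

theorem amul_assoc_general (d : ℕ) (μ ν w : LambdaHat) :
    amul d (amul d (Finsupp.single μ 1) (Finsupp.single ν 1)) (Finsupp.single w 1)
      = amul d (Finsupp.single μ 1) (amul d (Finsupp.single ν 1) (Finsupp.single w 1)) := by
  rw [amul_single_one_single_one, amul_single_one_single_one, amul_basisMul_single_one,
    amul_single_one_basisMul, gPoly_mul_gPoly, addExponent_append_assoc]

/-- The multiplication of `𝔸^d_q(Λ̂)` is associative: `(μ*ν)*w = μ*(ν*w)`. -/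
theorem amul_assoc (d : ℕ) (hd : 0 < d) (μ ν w : LambdaHat) :
    amul d (amul d (Finsupp.single μ 1) (Finsupp.single ν 1)) (Finsupp.single w 1)
      = amul d (Finsupp.single μ 1) (amul d (Finsupp.single ν 1) (Finsupp.single w 1)) :=
  amul_assoc_general d μ ν w

end
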